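/- If c^{h′} ≥ a_s then t_y < s for all y = 0,…,h′−1; and if d^{h} ≥ b_k then t′_x < k for all x = 0,…,h−1. -/

import Mathlib

open Finset
open scoped Classical

noncomputable section

namespace GenMaj

/-- Extended entries of a finite (1-indexed) sequence `x` of length `w`:
`+∞` for indices `≤ 0` and `-∞` for indices `> w`. -/
def ext (w : ℤ) (x : ℤ → ℤ) (i : ℤ) : EReal :=
  if i ≤ 0 then ⊤ else if i ≤ w then ((x i : ℝ) : EReal) else ⊥

/-- `h_j = min { i | d_{i-j+1} < g_i }` (with the above conventions), where `d` has
length `m` and `g` has length `m + s`. -/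
def hIdx (m s : ℤ) (d g : ℤ → ℤ) (j : ℤ) : ℤ :=
  sInf {i : ℤ | ext m d (i - j + 1) < ext (m + s) g i}

/-- Weak generalized majorization `g ≺″ (d, a)`. -/
def WeakMaj (m s : ℤ) (d a g : ℤ → ℤ) : Prop :=
  (∀ i ∈ Finset.Icc (1 : ℤ) m, g (i + s) ≤ d i) ∧
  (∀ j ∈ Finset.Icc (1 : ℤ) s,
      (∑ i ∈ Finset.Icc (hIdx m s d g j - j + 1) m, d i) +
          (∑ i ∈ Finset.Icc (j + 1) s, a i) ≤
        ∑ i ∈ Finset.Icc (hIdx m s d g j + 1) (m + s), g i) ∧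
  ((∑ i ∈ Finset.Icc (1 : ℤ) m, d i) + (∑ i ∈ Finset.Icc (1 : ℤ) s, a i) ≤
      ∑ i ∈ Finset.Icc (1 : ℤ) (m + s), g i)

/-- Generalized majorization `g ≺′ (d, a)`. -/
def GenMajRel (m s : ℤ) (d a g : ℤ → ℤ) : Prop :=
  (∀ i ∈ Finset.Icc (1 : ℤ) m, g (i + s) ≤ d i) ∧
  (∀ j ∈ Finset.Icc (1 : ℤ) s,
      (∑ i ∈ Finset.Icc (1 : ℤ) (hIdx m s d g j), g i) -
          (∑ i ∈ Finset.Icc (1 : ℤ) (hIdx m s d g j - j), d i) ≤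
        ∑ i ∈ Finset.Icc (1 : ℤ) j, a i) ∧
  (∑ i ∈ Finset.Icc (1 : ℤ) (m + s), g i =
      (∑ i ∈ Finset.Icc (1 : ℤ) m, d i) + (∑ i ∈ Finset.Icc (1 : ℤ) s, a i))

/-- The quantity `q_j = s - #{i ∈ S : c_i < d_j} + #{i > j : i ∉ Δ} + 1`. -/
def qd (m s : ℤ) (c d : ℤ → ℤ) (S Δ : Finset ℤ) (j : ℤ) : ℤ :=
  s - ((S.filter (fun i => c i < d j)).card : ℤ) +
      (((Finset.Icc (j + 1) m).filter (fun i => i ∉ Δ)).card : ℤ) + 1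

/-- The quantity `#{i : a_i > c_l} - s + #{i ∈ S : i > l} - #{i ∉ Δ : d_i < c_l} + 1`. -/
def Na (m s : ℤ) (a c d : ℤ → ℤ) (S Δ : Finset ℤ) (l : ℤ) : ℤ :=
  (((Finset.Icc (1 : ℤ) s).filter (fun i => c l < a i)).card : ℤ) - s +
      ((S.filter (fun i => l < i)).card : ℤ) -
      (((Finset.Icc (1 : ℤ) m).filter (fun i => i ∉ Δ ∧ d i < c l)).card : ℤ) + 1

/-- The membership criterion for the set `Δ` at the index `j`:  `j ∈ Δ` unless
`q_j ≤ s` and either (a) for the minimal `l ∈ S` with `d_j > c_l` one has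
`#{i : a_i > c_l} ≥ s - #{i ∈ S : i > l} + #{i ∉ Δ : d_i < c_l}` and `d_j` is among the
smallest `Na l` entries of `e` (the nonincreasing union of `d` and `a`, where `a`-entries
are placed before equal `d`-entries) that are bigger than `c_l`, or (b)
`Σ_{i ∈ S, c_i < d_j} c_i ≥ Σ_{i ∉ Δ, i > j} d_i + d_j + Σ_{i=q_j+1}^{s} a_i`.
The dual criterion for `S` is obtained by swapping the roles of the data. -/
def DeltaCond (m s : ℤ) (a c d : ℤ → ℤ) (S Δ : Finset ℤ) (j : ℤ) : Prop :=
  ¬ (qd m s c d S Δ j ≤ s ∧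
      ((∃ l ∈ S, c l < d j ∧ (∀ l' ∈ S, c l' < d j → l ≤ l') ∧
          1 ≤ Na m s a c d S Δ l ∧
          (((Finset.Icc (j + 1) m).filter (fun i => c l < d i)).card : ℤ) +
              (((Finset.Icc (1 : ℤ) s).filter (fun i => c l < a i ∧ a i < d j)).card : ℤ) + 1 ≤
            Na m s a c d S Δ l) ∨
        ((∑ i ∈ (Finset.Icc (j + 1) m).filter (fun i => i ∉ Δ), d i) + d j +
            (∑ i ∈ Finset.Icc (qd m s c d S Δ j + 1) s, a i) ≤
          ∑ i ∈ S.filter (fun i => c i < d j), c i)))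

/-- `t_j = s - (h' - j) + #{i ∉ Δ : d_i < c^j}` for `1 ≤ j ≤ h'`, with
`t_0 = m + s - h - h'` and `t_{h'+1} = s + 1`. -/
def tC (m s h h' : ℤ) (d : ℤ → ℤ) (Δ : Finset ℤ) (C : ℤ → ℤ) (j : ℤ) : ℤ :=
  if j = 0 then m + s - h - h'
  else if j = h' + 1 then s + 1
  else s - (h' - j) + (((Finset.Icc (1 : ℤ) m).filter (fun i => i ∉ Δ ∧ d i < C j)).card : ℤ)

/-- `z_j = #{i : d_i > c^j}` for `1 ≤ j ≤ h'`, with `z_0 = 0` and `z_{h'+1} = m`. -/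
def zC (m h' : ℤ) (d : ℤ → ℤ) (C : ℤ → ℤ) (j : ℤ) : ℤ :=
  if j = 0 then 0
  else if j = h' + 1 then m
  else (((Finset.Icc (1 : ℤ) m).filter (fun i => C j < d i)).card : ℤ)

/-- `m_j = #{i : a_i > c^j}` for `1 ≤ j ≤ h'`, with `m_0 = 0`. -/
def mC (s : ℤ) (a : ℤ → ℤ) (C : ℤ → ℤ) (j : ℤ) : ℤ :=
  if j = 0 then 0 else (((Finset.Icc (1 : ℤ) s).filter (fun i => C j < a i)).card : ℤ)

/-- `w_y = #{i ∉ Δ : c^y > d_i > c^{y+1}}` for `0 ≤ y ≤ h'` (with `c^0 = +∞`,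
`c^{h'+1} = -∞`). -/
def wC (m h' : ℤ) (d : ℤ → ℤ) (Δ : Finset ℤ) (C : ℤ → ℤ) (y : ℤ) : ℤ :=
  (((Finset.Icc (1 : ℤ) m).filter (fun i =>
      i ∉ Δ ∧ (1 ≤ y → d i < C y) ∧ (y + 1 ≤ h' → C (y + 1) < d i))).card : ℤ)

end GenMaj

open GenMaj

/-!
Write `T_z` for the set of indices `i ∉ Δ` with `d_i < c^z`. Then `t_z = s - h' + z + #T_z`
(also for `z = 0`, as `#T_0 = m - h`), so the claim is `#T_z < h' - z`. For `j = min T_z` the rule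
putting `j` outside `Δ` gives `q_j ≤ s`, i.e. `#T_z ≤ #{q : c^q < d_j} ≤ h' - z`. In the case of
equality `q_j = s`. Condition (a) is then impossible, since `c^{h'} ≥ a_s` forces `q_j < s`, and
condition (b) says `Σ_{i ∈ T_z} d_i ≤ c^{z+1} + ⋯ + c^{h'}`, whereas the weak bound for every
`T_q ⊆ T_z`, `q > z`, shows that the entries of `T_z` beat `c^{z+1}, …, c^{h'}` term by term.
The second statement is the first with `(a, d, Δ)` and `(b, c, S)` exchanged.
-/

theorem Finset.filter_val_map_eq_of_val_map_eq {α β γ : Type*} {s : Finset α} {t : Finset β}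
    {f : α → γ} {g : β → γ} (h : s.val.map f = t.val.map g) (p : γ → Prop) [DecidablePred p] :
    {i ∈ s | p (f i)}.val.map f = {i ∈ t | p (g i)}.val.map g := by
  have := congrArg (Multiset.filter p) h
  rw [Multiset.filter_map, Multiset.filter_map] at this
  exact this

theorem Finset.card_filter_eq_of_val_map_eq {α β γ : Type*} {s : Finset α} {t : Finset β}
    {f : α → γ} {g : β → γ} (h : s.val.map f = t.val.map g) (p : γ → Prop) [DecidablePred p] :
    #{i ∈ s | p (f i)} = #{i ∈ t | p (g i)} := by
  have := congrArg Multiset.card (filter_val_map_eq_of_val_map_eq h p)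
  rwa [Multiset.card_map, Multiset.card_map] at this

theorem Finset.sum_filter_eq_of_val_map_eq {α β γ : Type*} [AddCommMonoid γ] {s : Finset α}
    {t : Finset β} {f : α → γ} {g : β → γ} (h : s.val.map f = t.val.map g) (p : γ → Prop)
    [DecidablePred p] :
    ∑ i ∈ s with p (f i), f i = ∑ i ∈ t with p (g i), g i := by
  simp only [Finset.sum_eq_multiset_sum]
  exact congrArg Multiset.sum (filter_val_map_eq_of_val_map_eq h p)

theorem Finset.card_add_sum_le_sum_of_card_filter_le {ι κ : Type*} [LinearOrder κ]
    (F : Finset ι) (G : Finset κ) (f : ι → ℤ) (g : κ → ℤ) (hcard : #F = #G)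
    (hcount : ∀ q ∈ G, #{i ∈ F | f i ≤ g q} + #{p ∈ G | p < q} < #G) :
    (#G : ℤ) + ∑ q ∈ G, g q ≤ ∑ i ∈ F, f i := by
  induction G using Finset.induction_on_min generalizing F with
  | empty => simp_all
  | insert a G ha ih =>
    have haG : a ∉ G := fun h => lt_irrefl a (ha a h)
    have hfilter_a : {p ∈ insert a G | p < a} = ∅ :=
      filter_eq_empty_iff.2 fun p hp => by
        rcases mem_insert.1 hp with rfl | hp
        exacts [lt_irrefl p, not_lt.2 (ha p hp).le]
    obtain ⟨i₀, hi₀, hgf⟩ : ∃ i ∈ F, g a < f i := by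
      by_contra! hle
      have := hcount a (mem_insert_self a G)
      rw [filter_true_of_mem hle, hfilter_a, card_empty, hcard] at this
      omega
    have hcard' : #(F.erase i₀) = #G := by
      rw [card_erase_of_mem hi₀, hcard, card_insert_of_notMem haG]
      rfl
    have hrest := ih (F.erase i₀) hcard' fun q hq => by
      have hq' := hcount q (mem_insert_of_mem hq)
      have hsub := card_le_card (filter_subset_filter (fun i => f i ≤ g q) (erase_subset i₀ F))
      rw [filter_insert, if_pos (ha q hq), card_insert_of_notMem (by simp [haG]),
        card_insert_of_notMem haG] at hq'
      omega
    rw [card_insert_of_notMem haG, sum_insert haG, ← add_sum_erase F f hi₀]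
    push_cast
    linarith

namespace GenMaj

theorem one_le_and_le_of_ext_le {s h' : ℤ} {a C : ℤ → ℤ} (hh' : 1 ≤ h')
    (hext : ext s a s ≤ ext h' C h') : 1 ≤ s ∧ a s ≤ C h' := by
  simp only [ext, le_refl, if_true, show ¬h' ≤ 0 by omega, if_false] at hext
  split_ifs at hext with hs
  · exact absurd hext (by simp)
  · exact ⟨by omega, by exact_mod_cast hext⟩

/-- `{i ∉ Δ : d_i < c^z}`, with the convention `c^0 = +∞`. -/
def offDeltaBelow (m : ℤ) (d : ℤ → ℤ) (Δ : Finset ℤ) (C : ℤ → ℤ) (z : ℤ) : Finset ℤ :=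
  {i ∈ Icc 1 m | i ∉ Δ ∧ (1 ≤ z → d i < C z)}

section

variable {m n s h' : ℤ} {a c d C : ℤ → ℤ} {S Δ : Finset ℤ}

theorem mem_offDeltaBelow {z i : ℤ} :
    i ∈ offDeltaBelow m d Δ C z ↔ i ∈ Icc 1 m ∧ i ∉ Δ ∧ (1 ≤ z → d i < C z) :=
  mem_filter

theorem d_ne_C (hcd : ∀ i ∈ Icc (1 : ℤ) n, ∀ j ∈ Icc (1 : ℤ) m, c i ≠ d j)
    (hSsub : S ⊆ Icc 1 n) (hCval : S.val.map c = (Icc (1 : ℤ) h').val.map C)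
    {i p : ℤ} (hi : i ∈ Icc 1 m) (hp : p ∈ Icc 1 h') : d i ≠ C p := by
  obtain ⟨l, hl, hlp⟩ := Multiset.mem_map.1 (hCval ▸ Multiset.mem_map_of_mem C hp)
  exact hlp ▸ (hcd l (hSsub hl) i hi).symm

theorem filter_le_offDeltaBelow (hCmono : AntitoneOn C (Set.Icc 1 h'))
    (hdC : ∀ i ∈ Icc 1 m, ∀ p ∈ Icc 1 h', d i ≠ C p) {z p : ℤ} (hzp : z ≤ p)
    (hp : p ∈ Icc 1 h') :
    {i ∈ offDeltaBelow m d Δ C z | d i ≤ C p} = offDeltaBelow m d Δ C p := by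
  rw [mem_Icc] at hp
  ext i
  simp only [mem_filter, mem_offDeltaBelow]
  constructor
  · rintro ⟨⟨hi, hiΔ, -⟩, hle⟩
    exact ⟨hi, hiΔ, fun _ => lt_of_le_of_ne hle (hdC i hi p (mem_Icc.2 hp))⟩
  · rintro ⟨hi, hiΔ, hlt⟩
    have hlt := hlt hp.1
    refine ⟨⟨hi, hiΔ, fun hz => hlt.trans_le ?_⟩, hlt.le⟩
    exact hCmono ⟨hz, hzp.trans hp.2⟩ ⟨hp.1, hp.2⟩ hzp

theorem filter_C_lt_subset (hCmono : AntitoneOn C (Set.Icc 1 h')) {z j : ℤ} (hz : z ≤ h')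
    (hj : j ∈ offDeltaBelow m d Δ C z) : {q ∈ Icc 1 h' | C q < d j} ⊆ Icc (z + 1) h' := by
  intro q hq
  rw [mem_filter, mem_Icc] at hq
  refine mem_Icc.2 ⟨?_, hq.1.2⟩
  by_contra! hqz
  have hz1 : 1 ≤ z := by omega
  have hCq : C z ≤ C q := hCmono ⟨hq.1.1, by omega⟩ ⟨hz1, hz⟩ (by omega)
  exact absurd ((mem_offDeltaBelow.1 hj).2.2 hz1) (by omega)

theorem filter_notMem_eq_erase_min' (hdmono : AntitoneOn d (Set.Icc 1 m)) {z : ℤ}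
    (hT : (offDeltaBelow m d Δ C z).Nonempty) :
    {i ∈ Icc ((offDeltaBelow m d Δ C z).min' hT + 1) m | i ∉ Δ} =
      (offDeltaBelow m d Δ C z).erase ((offDeltaBelow m d Δ C z).min' hT) := by
  set j := (offDeltaBelow m d Δ C z).min' hT
  obtain ⟨hj, -, hjz⟩ := mem_offDeltaBelow.1 (min'_mem _ hT)
  rw [mem_Icc] at hj
  ext i
  simp only [mem_filter, mem_erase, mem_offDeltaBelow, mem_Icc]
  constructor
  · rintro ⟨hi, hiΔ⟩
    have hdij : d i ≤ d j := hdmono ⟨hj.1, hj.2⟩ ⟨by omega, hi.2⟩ (by omega)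
    exact ⟨by omega, ⟨by omega, hi.2⟩, hiΔ, fun hz => hdij.trans_lt (hjz hz)⟩
  · rintro ⟨hij, hi, hiΔ, hiz⟩
    have : j ≤ i := min'_le _ i (mem_offDeltaBelow.2 ⟨mem_Icc.2 hi, hiΔ, hiz⟩)
    exact ⟨⟨by omega, hi.2⟩, hiΔ⟩

theorem C_last_le_of_mem (hCmono : AntitoneOn C (Set.Icc 1 h'))
    (hCval : S.val.map c = (Icc (1 : ℤ) h').val.map C) {l : ℤ} (hl : l ∈ S) : C h' ≤ c l := by
  obtain ⟨q, hq, hql⟩ := Multiset.mem_map.1 (hCval ▸ Multiset.mem_map_of_mem c hl)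
  rw [mem_val, mem_Icc] at hq
  exact hql ▸ hCmono ⟨hq.1, hq.2⟩ ⟨by omega, le_rfl⟩ hq.2

theorem qd_lt_of_condA (hcmono : AntitoneOn c (Set.Icc 1 n))
    (hcd : ∀ i ∈ Icc (1 : ℤ) n, ∀ j ∈ Icc (1 : ℤ) m, c i ≠ d j) (hSsub : S ⊆ Icc 1 n)
    {j l : ℤ} (hj : j ∈ Icc 1 m) (hl : l ∈ S) (hlj : c l < d j)
    (hlmin : ∀ l' ∈ S, c l' < d j → l ≤ l')
    (hNa : (#{i ∈ Icc (j + 1) m | c l < d i} : ℤ) +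
        #{i ∈ Icc 1 s | c l < a i ∧ a i < d j} + 1 ≤ Na m s a c d S Δ l)
    (hs : 1 ≤ s) (has : a s ≤ c l) : qd m s c d S Δ j < s := by
  have hln := mem_Icc.1 (hSsub hl)
  have hj := mem_Icc.1 hj
  have hSfilter : {i ∈ S | c i < d j} = insert l {i ∈ S | l < i} := by
    ext i
    simp only [mem_filter, mem_insert]
    constructor
    · rintro ⟨hi, hij⟩
      rcases (hlmin i hi hij).eq_or_lt with rfl | hli
      exacts [Or.inl rfl, Or.inr ⟨hi, hli⟩]
    · rintro (rfl | ⟨hi, hli⟩)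
      · exact ⟨hl, hlj⟩
      · have hin := mem_Icc.1 (hSsub hi)
        exact ⟨hi, (hcmono ⟨hln.1, hln.2⟩ ⟨hin.1, hin.2⟩ hli.le).trans_lt hlj⟩
  have hcardS : #{i ∈ S | c i < d j} = #{i ∈ S | l < i} + 1 := by
    rw [hSfilter, card_insert_of_notMem (by simp)]
  have hcard_a : #{i ∈ Icc 1 s | c l < a i} ≤ #((Icc 1 s).erase s) :=
    card_le_card fun i hi => by
      rw [mem_filter] at hi
      exact mem_erase.2 ⟨by rintro rfl; omega, hi.1⟩
  rw [card_erase_of_mem (by simp; omega), Int.card_Icc] at hcard_a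
  have hsplit : #{i ∈ Icc (j + 1) m | i ∉ Δ} ≤
      #({i ∈ Icc (j + 1) m | c l < d i} ∪ {i ∈ Icc 1 m | i ∉ Δ ∧ d i < c l}) :=
    card_le_card fun i hi => by
      simp only [mem_filter, mem_union, mem_Icc] at hi ⊢
      rcases (hcd l (hSsub hl) i (mem_Icc.2 ⟨by omega, hi.1.2⟩)).lt_or_gt with h | h
      exacts [Or.inl ⟨hi.1, h⟩, Or.inr ⟨⟨by omega, hi.1.2⟩, hi.2, h⟩]
  have hunion := card_union_le {i ∈ Icc (j + 1) m | c l < d i} {i ∈ Icc 1 m | i ∉ Δ ∧ d i < c l}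
  unfold Na at hNa
  unfold qd
  omega

theorem card_offDeltaBelow_le (hdmono : AntitoneOn d (Set.Icc 1 m))
    (hΔdef : ∀ j ∈ Icc (1 : ℤ) m, (j ∈ Δ ↔ DeltaCond m s a c d S Δ j))
    (hCmono : AntitoneOn C (Set.Icc 1 h')) (hCval : S.val.map c = (Icc (1 : ℤ) h').val.map C)
    {z : ℤ} (hz : z ≤ h') :
    (#(offDeltaBelow m d Δ C z) : ℤ) ≤ h' - z := by
  rcases (offDeltaBelow m d Δ C z).eq_empty_or_nonempty with hT | hT
  · rw [hT, card_empty]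
    omega
  have hjT := min'_mem _ hT
  obtain ⟨hj, hjΔ, -⟩ := mem_offDeltaBelow.1 hjT
  have hq := (not_not.1 (mt (hΔdef _ hj).2 hjΔ)).1
  have hcardT := card_erase_add_one hjT
  rw [← filter_notMem_eq_erase_min' hdmono hT] at hcardT
  have hsub := card_le_card (filter_C_lt_subset hCmono hz hjT)
  rw [← card_filter_eq_of_val_map_eq hCval (· < d _), Int.card_Icc] at hsub
  unfold qd at hq
  omega

theorem sum_Icc_lt_sum_offDeltaBelow (hdmono : AntitoneOn d (Set.Icc 1 m))
    (hΔdef : ∀ j ∈ Icc (1 : ℤ) m, (j ∈ Δ ↔ DeltaCond m s a c d S Δ j))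
    (hCmono : AntitoneOn C (Set.Icc 1 h')) (hCval : S.val.map c = (Icc (1 : ℤ) h').val.map C)
    (hdC : ∀ i ∈ Icc 1 m, ∀ p ∈ Icc 1 h', d i ≠ C p) {z : ℤ}
    (hz0 : 0 ≤ z) (hz : z < h') (hcard : (#(offDeltaBelow m d Δ C z) : ℤ) = h' - z) :
    ∑ q ∈ Icc (z + 1) h', C q < ∑ i ∈ offDeltaBelow m d Δ C z, d i := by
  have hsum := card_add_sum_le_sum_of_card_filter_le (offDeltaBelow m d Δ C z) (Icc (z + 1) h')
    d C (by rw [Int.card_Icc]; omega) fun q hq => by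
      rw [mem_Icc] at hq
      rw [filter_le_offDeltaBelow hCmono hdC (by omega) (mem_Icc.2 ⟨by omega, hq.2⟩)]
      have hT := card_offDeltaBelow_le hdmono hΔdef hCmono hCval hq.2
      have hbelow : #{p ∈ Icc (z + 1) h' | p < q} ≤ #(Ico (z + 1) q) :=
        card_le_card fun p hp => by
          simp only [mem_filter, mem_Icc, mem_Ico] at hp ⊢
          omega
      rw [Int.card_Ico] at hbelow
      rw [Int.card_Icc]
      omega
  rw [Int.card_Icc] at hsum
  omega

theorem card_offDeltaBelow_lt (hcmono : AntitoneOn c (Set.Icc 1 n))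
    (hdmono : AntitoneOn d (Set.Icc 1 m))
    (hcd : ∀ i ∈ Icc (1 : ℤ) n, ∀ j ∈ Icc (1 : ℤ) m, c i ≠ d j) (hSsub : S ⊆ Icc 1 n)
    (hΔdef : ∀ j ∈ Icc (1 : ℤ) m, (j ∈ Δ ↔ DeltaCond m s a c d S Δ j))
    (hCmono : AntitoneOn C (Set.Icc 1 h')) (hCval : S.val.map c = (Icc (1 : ℤ) h').val.map C)
    (hs : 1 ≤ s) (has : a s ≤ C h') {z : ℤ} (hz0 : 0 ≤ z) (hz : z < h') :
    (#(offDeltaBelow m d Δ C z) : ℤ) < h' - z := by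
  by_contra! hge
  have hcard : (#(offDeltaBelow m d Δ C z) : ℤ) = h' - z :=
    (card_offDeltaBelow_le hdmono hΔdef hCmono hCval hz.le).antisymm hge
  have hT : (offDeltaBelow m d Δ C z).Nonempty := card_pos.1 (by omega)
  set T := offDeltaBelow m d Δ C z
  set j := T.min' hT
  have hjT : j ∈ T := min'_mem T hT
  obtain ⟨hj, hjΔ, -⟩ := mem_offDeltaBelow.1 hjT
  obtain ⟨hq, hcase⟩ := not_not.1 (mt (hΔdef j hj).2 hjΔ)
  have herase : {i ∈ Icc (j + 1) m | i ∉ Δ} = T.erase j := filter_notMem_eq_erase_min' hdmono hT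
  have hcardT := card_erase_add_one hjT
  rw [← herase] at hcardT
  have hcardS := card_filter_eq_of_val_map_eq hCval (· < d j)
  -- `q_j ≤ s` and `#T = h' - z` leave no room: the `c^q < d_j` are exactly `c^{z+1}, …, c^{h'}`.
  have hfilterC : {q ∈ Icc 1 h' | C q < d j} = Icc (z + 1) h' := by
    refine eq_of_subset_of_card_le (filter_C_lt_subset hCmono hz.le hjT) ?_
    rw [Int.card_Icc]
    unfold qd at hq
    omega
  have hqd : qd m s c d S Δ j = s := by
    unfold qd at hq ⊢
    rw [hcardS, hfilterC, Int.card_Icc] at *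
    omega
  rcases hcase with ⟨l, hl, hlj, hlmin, -, hNa⟩ | hsum
  · have := qd_lt_of_condA hcmono hcd hSsub hj hl hlj hlmin hNa hs
      (has.trans (C_last_le_of_mem hCmono hCval hl))
    omega
  · rw [hqd, Icc_eq_empty (show ¬s + 1 ≤ s by omega), sum_empty, add_zero, herase,
      sum_erase_add _ _ hjT, sum_filter_eq_of_val_map_eq hCval (· < d j), hfilterC] at hsum
    exact hsum.not_gt (sum_Icc_lt_sum_offDeltaBelow hdmono hΔdef hCmono hCval
      (fun i hi p hp => d_ne_C hcd hSsub hCval hi hp) hz0 hz hcard)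

theorem tC_lt {h : ℤ} (hcmono : AntitoneOn c (Set.Icc 1 n))
    (hdmono : AntitoneOn d (Set.Icc 1 m))
    (hcd : ∀ i ∈ Icc (1 : ℤ) n, ∀ j ∈ Icc (1 : ℤ) m, c i ≠ d j) (hSsub : S ⊆ Icc 1 n)
    (hΔsub : Δ ⊆ Icc 1 m) (hΔdef : ∀ j ∈ Icc (1 : ℤ) m, (j ∈ Δ ↔ DeltaCond m s a c d S Δ j))
    (hcardΔ : h = (#Δ : ℤ)) (hCmono : AntitoneOn C (Set.Icc 1 h'))
    (hCval : S.val.map c = (Icc (1 : ℤ) h').val.map C) (hext : ext s a s ≤ ext h' C h')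
    {y : ℤ} (hy : y ∈ Icc 0 (h' - 1)) : tC m s h h' d Δ C y < s := by
  rw [mem_Icc] at hy
  obtain ⟨hs, has⟩ := one_le_and_le_of_ext_le (by omega) hext
  have hlt := card_offDeltaBelow_lt hcmono hdmono hcd hSsub hΔdef hCmono hCval hs has hy.1
    (by omega)
  rcases hy.1.eq_or_lt with rfl | hy0
  · have hT0 : offDeltaBelow m d Δ C 0 = Icc 1 m \ Δ := by
      ext i
      simp [mem_offDeltaBelow]
    rw [hT0, card_sdiff_of_subset hΔsub, Int.card_Icc] at hlt
    have hΔcard := card_le_card hΔsub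
    rw [Int.card_Icc] at hΔcard
    rw [tC, if_pos rfl]
    omega
  · have hTy : {i ∈ Icc 1 m | i ∉ Δ ∧ d i < C y} = offDeltaBelow m d Δ C y :=
      filter_congr fun i _ => by simp [show 1 ≤ y by omega]
    simp only [tC, if_neg hy0.ne', if_neg (show y ≠ h' + 1 by omega), hTy]
    omega

end

end GenMaj

theorem statement13_general
    (m n s k : ℤ)
    (a b c d : ℤ → ℤ)
    (hcmono : AntitoneOn c (Set.Icc 1 n)) (hdmono : AntitoneOn d (Set.Icc 1 m))
    (hcd : ∀ i ∈ Finset.Icc (1 : ℤ) n, ∀ j ∈ Finset.Icc (1 : ℤ) m, c i ≠ d j)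
    (S Δ : Finset ℤ) (hSsub : S ⊆ Finset.Icc 1 n) (hΔsub : Δ ⊆ Finset.Icc 1 m)
    (hSdef : ∀ j ∈ Finset.Icc (1 : ℤ) n, (j ∈ S ↔ DeltaCond n k b d c Δ S j))
    (hΔdef : ∀ j ∈ Finset.Icc (1 : ℤ) m, (j ∈ Δ ↔ DeltaCond m s a c d S Δ j))
    (h h' : ℤ) (hcardΔ : h = (Δ.card : ℤ)) (hcardS : h' = (S.card : ℤ))
    (D C : ℤ → ℤ)
    (hDmono : AntitoneOn D (Set.Icc 1 h))
    (hDval : Δ.val.map d = (Finset.Icc (1 : ℤ) h).val.map D)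
    (hCmono : AntitoneOn C (Set.Icc 1 h'))
    (hCval : S.val.map c = (Finset.Icc (1 : ℤ) h').val.map C)
    :
    (ext s a s ≤ ext h' C h' →
        ∀ y ∈ Finset.Icc (0 : ℤ) (h' - 1), tC m s h h' d Δ C y < s) ∧
    (ext k b k ≤ ext h D h →
        ∀ x ∈ Finset.Icc (0 : ℤ) (h - 1), tC n k h' h c S D x < k) :=
  ⟨fun hext _ hy => tC_lt hcmono hdmono hcd hSsub hΔsub hΔdef hcardΔ hCmono hCval hext hy,
    fun hext _ hx => tC_lt hdmono hcmono (fun i hi j hj => (hcd j hj i hi).symm) hΔsub hSsub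
      hSdef hcardS hDmono hDval hext hx⟩

/-- Corollary: `c^{h'} ≥ a_s` implies `t_y < s` for `y = 0,…,h'-1`, and `d^h ≥ b_k` implies `t'_x < k` for `x = 0,…,h-1`. -/
theorem statement13
    (m n s k : ℤ) (hm : 0 ≤ m) (hn : 0 ≤ n) (hs : 0 ≤ s) (hk : 0 ≤ k)
    (hmnsk : m + s = n + k)
    (a b c d : ℤ → ℤ)
    (ha : AntitoneOn a (Set.Icc 1 s)) (hb : AntitoneOn b (Set.Icc 1 k))
    (hcmono : AntitoneOn c (Set.Icc 1 n)) (hdmono : AntitoneOn d (Set.Icc 1 m))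
    (hcd : ∀ i ∈ Finset.Icc (1 : ℤ) n, ∀ j ∈ Finset.Icc (1 : ℤ) m, c i ≠ d j)
    (S Δ : Finset ℤ) (hSsub : S ⊆ Finset.Icc 1 n) (hΔsub : Δ ⊆ Finset.Icc 1 m)
    (hSdef : ∀ j ∈ Finset.Icc (1 : ℤ) n, (j ∈ S ↔ DeltaCond n k b d c Δ S j))
    (hΔdef : ∀ j ∈ Finset.Icc (1 : ℤ) m, (j ∈ Δ ↔ DeltaCond m s a c d S Δ j))
    (h h' : ℤ) (hcardΔ : h = (Δ.card : ℤ)) (hcardS : h' = (S.card : ℤ))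
    (D C : ℤ → ℤ)
    (hDmono : AntitoneOn D (Set.Icc 1 h))
    (hDval : Δ.val.map d = (Finset.Icc (1 : ℤ) h).val.map D)
    (hCmono : AntitoneOn C (Set.Icc 1 h'))
    (hCval : S.val.map c = (Finset.Icc (1 : ℤ) h').val.map C)
    :
    (ext s a s ≤ ext h' C h' →
        ∀ y ∈ Finset.Icc (0 : ℤ) (h' - 1), tC m s h h' d Δ C y < s) ∧
    (ext k b k ≤ ext h D h →
        ∀ x ∈ Finset.Icc (0 : ℤ) (h - 1), tC n k h' h c S D x < k) :=
  statement13_general m n s k a b c d hcmono hdmono hcd S Δ hSsub hΔsub hSdef hΔdef h h' hcardΔ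
    hcardS D C hDmono hDval hCmono hCval
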